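/- Let f be an ergodic p.m.p. action of the countable group Γ on a standard Borel probability space (X, μ), and let K be a compact metrizable space. If f is strongly ergodic, then the weak* closure of E(f, K) is contained in E(Γ, K), the set of ergodic Γ-invariant Borel probability measures on K^Γ. -/

import Mathlib

open MeasureTheory Filter Topology

/-- A probability-measure-preserving action of a group `Γ` on `(X, μ)`. -/
def IsPMPAction {Γ X : Type*} [Group Γ] [MeasurableSpace X]
    (f : Γ → X → X) (μ : Measure X) : Prop :=
  (∀ γ : Γ, MeasurePreserving (f γ) μ μ) ∧ (∀ x : X, f 1 x = x) ∧
    (∀ γ₁ γ₂ : Γ, ∀ x : X, f (γ₁ * γ₂) x = f γ₁ (f γ₂ x))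

/-- The action is (essentially) free. -/
def IsFreeAction {Γ X : Type*} [MeasurableSpace X]
    (f : Γ → X → X) (μ : Measure X) : Prop :=
  ∀ᵐ x ∂μ, ∀ γ γ' : Γ, γ ≠ γ' → f γ x ≠ f γ' x

/-- `f` (acting on `(X, μ)`) weakly contains `g` (acting on `(Y, ν)`). -/
def WeaklyContains {Γ X Y : Type*} [MeasurableSpace X] [MeasurableSpace Y]
    (f : Γ → X → X) (μ : Measure X) (g : Γ → Y → Y) (ν : Measure Y) : Prop :=
  ∀ (n : ℕ) (Ys : Fin n → Set Y), (∀ i, MeasurableSet (Ys i)) →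
    ∀ (S : Finset Γ) (ε : ℝ), 0 < ε →
      ∃ Xs : Fin n → Set X, (∀ i, MeasurableSet (Xs i)) ∧
        ∀ i j : Fin n, ∀ γ ∈ S,
          |(μ (f γ '' Xs i ∩ Xs j)).toReal - (ν (g γ '' Ys i ∩ Ys j)).toReal| < ε

/-- The (left) shift action of `Γ` on `Γ → κ`. -/
def bernoulliShift {Γ κ : Type*} [Group Γ] (γ : Γ) (ω : Γ → κ) : Γ → κ :=
  fun δ => ω (δ * γ)

/-- `ν` is the product (Bernoulli) measure on `Γ → κ` with one-dimensional marginal `κm`: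
it is a probability measure giving every cylinder set the product of the marginals. -/
def IsBernoulliMeasure {Γ κ : Type*} [MeasurableSpace κ]
    (κm : Measure κ) (ν : Measure (Γ → κ)) : Prop :=
  IsProbabilityMeasure ν ∧
    ∀ (F : Finset Γ) (B : Γ → Set κ), (∀ γ, MeasurableSet (B γ)) →
      ν {ω | ∀ γ ∈ F, ω γ ∈ B γ} = ∏ γ ∈ F, κm (B γ)

/-- The action `f` is ergodic: every invariant Borel set is null or conull. -/
def IsErgodicAction {Γ X : Type*} [MeasurableSpace X]
    (f : Γ → X → X) (μ : Measure X) : Prop :=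
  ∀ A : Set X, MeasurableSet A → (∀ γ : Γ, f γ ⁻¹' A = A) → μ A = 0 ∨ μ A = 1

/-- A sequence of Borel sets `A n` is almost invariant:
`μ (f_γ A_n ∆ A_n) → 0` for every `γ`. -/
def AlmostInvariantSeq {Γ X : Type*} [MeasurableSpace X]
    (f : Γ → X → X) (μ : Measure X) (A : ℕ → Set X) : Prop :=
  ∀ γ : Γ, Tendsto (fun n => μ (symmDiff (f γ '' A n) (A n))) atTop (nhds 0)

/-- A sequence of sets `A n` is trivial: `μ(A_n)(1 - μ(A_n)) → 0`. -/
def TrivialSeq {X : Type*} [MeasurableSpace X] (μ : Measure X) (A : ℕ → Set X) : Prop :=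
  Tendsto (fun n => μ (A n) * (1 - μ (A n))) atTop (nhds 0)

/-- The action `f` is strongly ergodic: it is ergodic and every almost invariant sequence of
Borel sets is trivial. -/
def IsStronglyErgodic {Γ X : Type*} [MeasurableSpace X]
    (f : Γ → X → X) (μ : Measure X) : Prop :=
  IsErgodicAction f μ ∧
    ∀ A : ℕ → Set X, (∀ n, MeasurableSet (A n)) →
      AlmostInvariantSeq f μ A → TrivialSeq μ A

open TopologicalSpace in
/-- `E(f, K)`: the set of invariant measures on `K^Γ` obtained as pushforwards `Φ∘μ` of `μ`
under maps `Φ(x)(γ) = φ(f_γ x)` for Borel `φ : X → K`. -/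
def EClass {Γ X : Type*} (K : Type*) [Group Γ] [MeasurableSpace X] [TopologicalSpace K]
    [MeasurableSpace K] (f : Γ → X → X) (μ : Measure X) [IsProbabilityMeasure μ] :
    Set (ProbabilityMeasure (Γ → K)) :=
  {ρ | ∃ φ : X → K, Measurable φ ∧
    (ρ : Measure (Γ → K)) = μ.map (fun x => fun γ : Γ => φ (f γ x))}

open TopologicalSpace in
/-- `E(Γ, K)`: the set of ergodic shift-invariant Borel probability measures on `K^Γ`. -/
def ErgodicInvariantMeasures (Γ K : Type*) [Group Γ] [TopologicalSpace K]
    [MeasurableSpace K] : Set (ProbabilityMeasure (Γ → K)) :=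
  {ρ | (∀ γ : Γ, MeasurePreserving (bernoulliShift γ) (ρ : Measure (Γ → K)) ρ) ∧
      IsErgodicAction (bernoulliShift (Γ := Γ) (κ := K)) (ρ : Measure (Γ → K))}

/-!
Shift invariance passes to weak* limits, and every measure `Φ∘μ` in `E(f, K)` is shift invariant
because `Φ` is equivariant. For ergodicity of a limit `ρ`, let `A` be a shift-invariant set and
approximate `1_A` in `L¹(ρ)` by a bounded continuous `F`. The integrals of `F`, of the distance
from `F` to `{0, 1}` and of `|F ∘ T_γ - F|` depend continuously on the measure, so the first stays
close to `ρ A` and the other two stay small at every `ρ' = Φ∘μ ∈ E(f, K)` weakly close to `ρ`.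
Rounding `F` at `1/2` then gives a set `S` that is almost invariant for `ρ'` with `ρ' S ≈ ρ A`, and
`B = Φ⁻¹ S` is almost invariant in `X` with `μ B ≈ ρ A`. Letting the tolerance tend to `0`
yields an almost invariant sequence with `μ B_n → ρ A`, so strong ergodicity forces
`ρ A ∈ {0, 1}`.
-/

open scoped BoundedContinuousFunction symmDiff
open Set

lemma MeasureTheory.MeasurePreserving.integral_comp_of_aestronglyMeasurable {α β G : Type*}
    [MeasurableSpace α] [MeasurableSpace β] [NormedAddCommGroup G] [NormedSpace ℝ G]
    {μ : Measure α} {ν : Measure β} {T : α → β} (hT : MeasurePreserving T μ ν) {g : β → G}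
    (hg : AEStronglyMeasurable g ν) : ∫ x, g (T x) ∂μ = ∫ y, g y ∂ν := by
  rw [← hT.map_eq] at hg ⊢
  exact (integral_map hT.measurable.aemeasurable hg).symm

-- `min |t| |1 - t|` is the distance from `t` to `{0, 1}`.
lemma abs_indicator_setOf_half_le_sub_le {Ω : Type*} (F : Ω → ℝ) (x : Ω) :
    |{y | 1 / 2 ≤ F y}.indicator 1 x - F x| ≤ min |F x| |1 - F x| := by
  by_cases h : 1 / 2 ≤ F x
  · rw [indicator_of_mem (show x ∈ {y | 1 / 2 ≤ F y} from h), Pi.one_apply]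
    refine le_min ?_ le_rfl
    rw [abs_le]
    constructor <;> cases abs_cases (F x) <;> cases abs_cases (F x - 1) <;> linarith
  · rw [indicator_of_notMem (show x ∉ {y | 1 / 2 ≤ F y} from h), zero_sub, abs_neg]
    refine le_min le_rfl ?_
    cases abs_cases (F x) <;> cases abs_cases (1 - F x) <;> linarith

lemma min_abs_abs_one_sub_le_abs_sub_indicator {Ω : Type*} (A : Set Ω) (t : ℝ) (x : Ω) :
    min |t| |1 - t| ≤ |t - A.indicator 1 x| := by
  by_cases h : x ∈ A
  · rw [indicator_of_mem h, Pi.one_apply, abs_sub_comm]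
    exact min_le_right _ _
  · rw [indicator_of_notMem h, sub_zero]
    exact min_le_left _ _

section BoundedContinuous

variable {Ω : Type*} [TopologicalSpace Ω] [MeasurableSpace Ω] [OpensMeasurableSpace Ω]
  {ν : Measure Ω} [IsFiniteMeasure ν] (F : Ω →ᵇ ℝ) {A : Set Ω}

lemma integrable_min_abs_abs_one_sub : Integrable (fun x => min |F x| |1 - F x|) ν :=
  (|F| ⊓ |1 - F|).integrable ν

lemma abs_measureReal_setOf_half_le_sub_integral_le :
    |ν.real {x | 1 / 2 ≤ F x} - ∫ x, F x ∂ν| ≤ ∫ x, min |F x| |1 - F x| ∂ν := by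
  have hS : MeasurableSet {x | 1 / 2 ≤ F x} :=
    measurableSet_le measurable_const F.continuous.measurable
  have hind : Integrable ({x | 1 / 2 ≤ F x}.indicator (1 : Ω → ℝ)) ν :=
    (integrable_const 1).indicator hS
  rw [← integral_indicator_one hS, ← integral_sub hind (F.integrable ν)]
  exact abs_integral_le_integral_abs.trans (integral_mono (hind.sub (F.integrable ν)).abs
    (integrable_min_abs_abs_one_sub F) (abs_indicator_setOf_half_le_sub_le F))

lemma measureReal_preimage_symmDiff_setOf_half_le_le {T : Ω → Ω}
    (hT : MeasurePreserving T ν ν) :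
    ν.real ((T ⁻¹' {x | 1 / 2 ≤ F x}) ∆ {x | 1 / 2 ≤ F x}) ≤
      2 * ∫ x, min |F x| |1 - F x| ∂ν + ∫ x, |F (T x) - F x| ∂ν := by
  set S := {x | 1 / 2 ≤ F x}
  have hS : MeasurableSet S := measurableSet_le measurable_const F.continuous.measurable
  have hD : MeasurableSet ((T ⁻¹' S) ∆ S) := (hS.preimage hT.measurable).symmDiff hS
  set m := fun x => min |F x| |1 - F x|
  have hm : Integrable m ν := integrable_min_abs_abs_one_sub F
  have hmT : Integrable (fun x => m (T x)) ν := hT.integrable_comp_of_integrable hm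
  have hd : Integrable (fun x => |F (T x) - F x|) ν :=
    ((hT.integrable_comp_of_integrable (F.integrable ν)).sub (F.integrable ν)).abs
  have hpt : ∀ x, ((T ⁻¹' S) ∆ S).indicator 1 x ≤ m (T x) + |F (T x) - F x| + m x := by
    intro x
    calc ((T ⁻¹' S) ∆ S).indicator 1 x ≤ |(T ⁻¹' S).indicator 1 x - S.indicator 1 x| :=
          (le_abs_self _).trans_eq (abs_indicator_symmDiff _ _ _ x)
      _ = |S.indicator 1 (T x) - S.indicator 1 x| := rfl
      _ ≤ |S.indicator 1 (T x) - F (T x)| + |F (T x) - F x| + |F x - S.indicator 1 x| :=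
          by linarith [abs_sub_le (S.indicator 1 (T x)) (F (T x)) (S.indicator 1 x),
            abs_sub_le (F (T x)) (F x) (S.indicator (1 : Ω → ℝ) x)]
      _ ≤ m (T x) + |F (T x) - F x| + m x := by
          gcongr
          · exact abs_indicator_setOf_half_le_sub_le F (T x)
          · rw [abs_sub_comm]; exact abs_indicator_setOf_half_le_sub_le F x
  calc ν.real ((T ⁻¹' S) ∆ S) = ∫ x, ((T ⁻¹' S) ∆ S).indicator 1 x ∂ν :=
        (integral_indicator_one hD).symm
    _ ≤ ∫ x, (m (T x) + |F (T x) - F x| + m x) ∂ν :=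
        integral_mono ((integrable_const 1).indicator hD) ((hmT.add hd).add hm) hpt
    _ = 2 * ∫ x, m x ∂ν + ∫ x, |F (T x) - F x| ∂ν := by
        have hmTd : Integrable (fun x => m (T x) + |F (T x) - F x|) ν := hmT.add hd
        rw [integral_add hmTd hm, integral_add hmT hd,
          hT.integral_comp_of_aestronglyMeasurable hm.1]
        ring


lemma integrable_abs_sub_indicator_one (hA : MeasurableSet A) :
    Integrable (fun x => |F x - A.indicator 1 x|) ν :=
  ((F.integrable ν).sub ((integrable_const 1).indicator hA)).abs

lemma abs_integral_sub_measureReal_le (hA : MeasurableSet A) :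
    |∫ x, F x ∂ν - ν.real A| ≤ ∫ x, |F x - A.indicator 1 x| ∂ν := by
  have hind : Integrable (A.indicator (1 : Ω → ℝ)) ν := (integrable_const 1).indicator hA
  rw [← integral_indicator_one hA, ← integral_sub (F.integrable ν) hind]
  exact abs_integral_le_integral_abs

lemma integral_min_abs_abs_one_sub_le (hA : MeasurableSet A) :
    ∫ x, min |F x| |1 - F x| ∂ν ≤ ∫ x, |F x - A.indicator 1 x| ∂ν :=
  integral_mono (integrable_min_abs_abs_one_sub F) (integrable_abs_sub_indicator_one F hA)
    fun x => min_abs_abs_one_sub_le_abs_sub_indicator A (F x) x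

lemma integral_abs_comp_sub_le_of_preimage_eq {T : Ω → Ω} (hT : MeasurePreserving T ν ν)
    (hA : MeasurableSet A) (hAT : T ⁻¹' A = A) :
    ∫ x, |F (T x) - F x| ∂ν ≤ 2 * ∫ x, |F x - A.indicator 1 x| ∂ν := by
  have hint := integrable_abs_sub_indicator_one F hA (ν := ν)
  have hintT : Integrable (fun x => |F (T x) - A.indicator 1 (T x)|) ν :=
    hT.integrable_comp_of_integrable hint
  have hpt : ∀ x,
      |F (T x) - F x| ≤ |F (T x) - A.indicator 1 (T x)| + |F x - A.indicator 1 x| := by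
    intro x
    have hx : A.indicator (1 : Ω → ℝ) (T x) = A.indicator 1 x := by
      change (T ⁻¹' A).indicator (1 : Ω → ℝ) x = _
      rw [hAT]
    rw [hx, abs_sub_comm (F x)]
    exact abs_sub_le _ _ _
  have hd : Integrable (fun x => |F (T x) - F x|) ν :=
    ((hT.integrable_comp_of_integrable (F.integrable ν)).sub (F.integrable ν)).abs
  calc ∫ x, |F (T x) - F x| ∂ν
      ≤ ∫ x, (|F (T x) - A.indicator 1 (T x)| + |F x - A.indicator 1 x|) ∂ν :=
        integral_mono hd (hintT.add hint) hpt
    _ = 2 * ∫ x, |F x - A.indicator 1 x| ∂ν := by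
        rw [integral_add hintT hint, hT.integral_comp_of_aestronglyMeasurable hint.1]
        ring

end BoundedContinuous

theorem exists_measurableSet_eventually_almostInvariant {Ω Γ : Type*} [TopologicalSpace Ω]
    [NormalSpace Ω] [MeasurableSpace Ω] [BorelSpace Ω] {T : Γ → Ω → Ω}
    (hT : ∀ γ, Continuous (T γ)) {ρ : ProbabilityMeasure Ω} [(ρ : Measure Ω).WeaklyRegular]
    (hρT : ∀ γ, MeasurePreserving (T γ) ρ ρ) {A : Set Ω} (hA : MeasurableSet A)
    (hAT : ∀ γ, T γ ⁻¹' A = A) (s : Finset Γ) {ε : ℝ} (hε : 0 < ε) :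
    ∃ S, MeasurableSet S ∧ ∀ᶠ ν : ProbabilityMeasure Ω in 𝓝 ρ,
      |(ν : Measure Ω).real S - (ρ : Measure Ω).real A| ≤ ε ∧
        ∀ γ ∈ s, MeasurePreserving (T γ) ν ν → (ν : Measure Ω).real ((T γ ⁻¹' S) ∆ S) ≤ ε := by
  -- the two estimates below cost `4 * (ε / 7)` and `7 * (ε / 7)`
  have hδ : 0 < ε / 7 := by positivity
  have hind : Integrable (A.indicator (1 : Ω → ℝ)) ρ := (integrable_const 1).indicator hA
  obtain ⟨F, hF, -⟩ := hind.exists_boundedContinuous_integral_sub_le hδ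
  have hFA : ∫ x, |F x - A.indicator 1 x| ∂(ρ : Measure Ω) ≤ ε / 7 := by
    simpa only [Real.norm_eq_abs, abs_sub_comm] using hF
  have near (g : Ω →ᵇ ℝ) :
      ∀ᶠ ν : ProbabilityMeasure Ω in 𝓝 ρ,
        |∫ x, g x ∂(ν : Measure Ω) - ∫ x, g x ∂(ρ : Measure Ω)| < ε / 7 :=
    Metric.tendsto_nhds.mp
      ((ProbabilityMeasure.continuous_integral_boundedContinuousFunction g).tendsto ρ) _ hδ
  refine ⟨{x | 1 / 2 ≤ F x}, measurableSet_le measurable_const F.continuous.measurable, ?_⟩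
  filter_upwards [near F, near (|F| ⊓ |1 - F|), (eventually_all_finset s).mpr
    fun γ _ => near |F.compContinuous ⟨T γ, hT γ⟩ - F|] with ν hνF hνm hνd
  have hνm : |∫ x, min |F x| |1 - F x| ∂(ν : Measure Ω) -
      ∫ x, min |F x| |1 - F x| ∂(ρ : Measure Ω)| < ε / 7 := hνm
  have hρA := abs_integral_sub_measureReal_le (ν := ρ) F hA
  have hρm := integral_min_abs_abs_one_sub_le (ν := ρ) F hA
  refine ⟨?_, fun γ hγ hνT => ?_⟩
  · have hνS := abs_measureReal_setOf_half_le_sub_integral_le (ν := ν) F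
    rw [abs_le] at hνS hρA ⊢
    rw [abs_lt] at hνF hνm
    constructor <;> linarith
  · have hνd : |∫ x, |F (T γ x) - F x| ∂(ν : Measure Ω) -
        ∫ x, |F (T γ x) - F x| ∂(ρ : Measure Ω)| < ε / 7 := hνd γ hγ
    have hρd := integral_abs_comp_sub_le_of_preimage_eq F (hρT γ) hA (hAT γ)
    have hνS := measureReal_preimage_symmDiff_setOf_half_le_le F hνT
    rw [abs_lt] at hνd hνm
    linarith

lemma isClosed_setOf_measurePreserving {Ω : Type*} [TopologicalSpace Ω] [HasOuterApproxClosed Ω]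
    [MeasurableSpace Ω] [BorelSpace Ω] {T : Ω → Ω} (hT : Continuous T) :
    IsClosed {ν : ProbabilityMeasure Ω | MeasurePreserving T ν ν} := by
  have : {ν : ProbabilityMeasure Ω | MeasurePreserving T ν ν} =
      {ν | ν.map hT.measurable.aemeasurable = ν} := by
    ext ν
    simp only [mem_ofPred_eq, ← ProbabilityMeasure.toMeasure_injective.eq_iff,
      ProbabilityMeasure.toMeasure_map]
    exact ⟨MeasurePreserving.map_eq, fun h => ⟨hT.measurable, h⟩⟩
  rw [this]
  exact isClosed_eq (ProbabilityMeasure.continuous_map hT) continuous_id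

section BernoulliShift

variable {Γ K : Type*} [Group Γ]

lemma continuous_bernoulliShift [TopologicalSpace K] (γ : Γ) :
    Continuous (bernoulliShift (κ := K) γ) :=
  continuous_pi fun δ => continuous_apply (δ * γ)

lemma measurable_bernoulliShift [MeasurableSpace K] (γ : Γ) :
    Measurable (bernoulliShift (κ := K) γ) :=
  measurable_pi_lambda _ fun δ => measurable_pi_apply (δ * γ)

end BernoulliShift

lemma IsStronglyErgodic.eq_zero_or_eq_one_of_tendsto {Γ X : Type*} [MeasurableSpace X]
    {f : Γ → X → X} {μ : Measure X} [IsProbabilityMeasure μ] (hse : IsStronglyErgodic f μ)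
    {A : ℕ → Set X} (hA : ∀ n, MeasurableSet (A n)) (hAI : AlmostInvariantSeq f μ A) {c : ℝ}
    (hc : Tendsto (fun n => μ.real (A n)) atTop (𝓝 c)) : c = 0 ∨ c = 1 := by
  have hlim : Tendsto (fun n => μ.real (A n) * (1 - μ.real (A n))) atTop (𝓝 (c * (1 - c))) :=
    hc.mul (tendsto_const_nhds.sub hc)
  have hzero : Tendsto (fun n => μ.real (A n) * (1 - μ.real (A n))) atTop (𝓝 0) := by
    have := (ENNReal.tendsto_toReal ENNReal.zero_ne_top).comp (hse.2 A hA hAI)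
    simpa [Function.comp_def, ENNReal.toReal_mul,
      ENNReal.toReal_sub_of_le prob_le_one ENNReal.one_ne_top, measureReal_def] using this
  rcases mul_eq_zero.mp (tendsto_nhds_unique hlim hzero) with h | h
  · exact .inl h
  · exact .inr (by linarith)

namespace IsPMPAction

variable {Γ X K : Type*} [Group Γ] [MeasurableSpace X] {μ : Measure X} {f : Γ → X → X}

lemma image_eq_preimage_inv (hf : IsPMPAction f μ) (γ : Γ) (B : Set X) :
    f γ '' B = f γ⁻¹ ⁻¹' B :=
  congrFun (image_eq_preimage_of_inverse (fun x => by rw [← hf.2.2, inv_mul_cancel, hf.2.1])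
    (fun x => by rw [← hf.2.2, mul_inv_cancel, hf.2.1])) B

lemma comp_eq_bernoulliShift_comp (hf : IsPMPAction f μ) (φ : X → K) (γ : Γ) :
    (fun x δ => φ (f δ x)) ∘ f γ = bernoulliShift γ ∘ fun x δ => φ (f δ x) := by
  funext x δ
  simp only [Function.comp_apply, bernoulliShift, hf.2.2]

variable [MeasurableSpace K] {φ : X → K}

lemma measurable_pi_lambda_comp (hf : IsPMPAction f μ) (hφ : Measurable φ) :
    Measurable fun x δ => φ (f δ x) :=
  measurable_pi_lambda _ fun δ => hφ.comp (hf.1 δ).measurable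

lemma measurePreserving_bernoulliShift_map (hf : IsPMPAction f μ) (hφ : Measurable φ) (γ : Γ) :
    MeasurePreserving (bernoulliShift γ) (μ.map fun x δ => φ (f δ x))
      (μ.map fun x δ => φ (f δ x)) := by
  refine ⟨measurable_bernoulliShift γ, ?_⟩
  rw [Measure.map_map (measurable_bernoulliShift γ) (hf.measurable_pi_lambda_comp hφ),
    ← hf.comp_eq_bernoulliShift_comp, ← Measure.map_map (hf.measurable_pi_lambda_comp hφ)
    (hf.1 γ).measurable, (hf.1 γ).map_eq]

lemma measure_image_symmDiff_preimage (hf : IsPMPAction f μ) (hφ : Measurable φ) (γ : Γ)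
    {S : Set (Γ → K)} (hS : MeasurableSet S) :
    μ ((f γ '' ((fun x δ => φ (f δ x)) ⁻¹' S)) ∆ ((fun x δ => φ (f δ x)) ⁻¹' S)) =
      μ.map (fun x δ => φ (f δ x)) ((bernoulliShift γ⁻¹ ⁻¹' S) ∆ S) := by
  rw [hf.image_eq_preimage_inv, ← preimage_comp, hf.comp_eq_bernoulliShift_comp, preimage_comp,
    ← preimage_symmDiff, Measure.map_apply (hf.measurable_pi_lambda_comp hφ)
      ((hS.preimage (measurable_bernoulliShift _)).symmDiff hS)]

variable [TopologicalSpace K] [TopologicalSpace.PseudoMetrizableSpace K]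
  [SecondCountableTopology K] [BorelSpace K] [Countable Γ] [IsProbabilityMeasure μ]

lemma closure_EClass_subset_setOf_measurePreserving (hf : IsPMPAction f μ) :
    closure (EClass K f μ) ⊆
      {ρ | ∀ γ, MeasurePreserving (bernoulliShift γ) (ρ : Measure (Γ → K)) ρ} := by
  refine closure_minimal
    (fun ρ ⟨φ, hφ, hρ⟩ γ => hρ ▸ hf.measurePreserving_bernoulliShift_map hφ γ) ?_
  simpa only [ofPred_forall] using
    isClosed_iInter fun γ => isClosed_setOf_measurePreserving (continuous_bernoulliShift γ)

theorem exists_almostInvariantSeq_tendsto_measureReal (hf : IsPMPAction f μ)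
    {ρ : ProbabilityMeasure (Γ → K)} (hρ : ρ ∈ closure (EClass K f μ)) {A : Set (Γ → K)}
    (hA : MeasurableSet A) (hAinv : ∀ γ, bernoulliShift γ ⁻¹' A = A) :
    ∃ B : ℕ → Set X, (∀ n, MeasurableSet (B n)) ∧ AlmostInvariantSeq f μ B ∧
      Tendsto (fun n => μ.real (B n)) atTop (𝓝 ((ρ : Measure (Γ → K)).real A)) := by
  classical
  obtain ⟨e, he⟩ := exists_surjective_nat Γ
  have step (n : ℕ) : ∃ B, MeasurableSet B ∧
      |μ.real B - (ρ : Measure (Γ → K)).real A| ≤ 1 / (n + 1) ∧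
      ∀ j < n, μ.real ((f (e j) '' B) ∆ B) ≤ 1 / (n + 1) := by
    obtain ⟨S, hS, hev⟩ := exists_measurableSet_eventually_almostInvariant
      continuous_bernoulliShift (hf.closure_EClass_subset_setOf_measurePreserving hρ) hA hAinv
      ((Finset.range n).image fun j => (e j)⁻¹) (ε := 1 / (n + 1)) (by positivity)
    obtain ⟨ν, ⟨hνS, hνT⟩, φ, hφ, hν⟩ :=
      (hev.and_frequently (mem_closure_iff_frequently.mp hρ)).exists
    refine ⟨_, hf.measurable_pi_lambda_comp hφ hS, ?_, fun j hj => ?_⟩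
    · rwa [measureReal_def, ← Measure.map_apply (hf.measurable_pi_lambda_comp hφ) hS, ← hν]
    · rw [measureReal_def, hf.measure_image_symmDiff_preimage hφ _ hS, ← hν]
      exact hνT _ (Finset.mem_image_of_mem _ (Finset.mem_range.mpr hj))
        (hν ▸ hf.measurePreserving_bernoulliShift_map hφ _)
  choose B hB hBA hBinv using step
  refine ⟨B, hB, fun γ => ?_, ?_⟩
  · obtain ⟨j, rfl⟩ := he γ
    have : Tendsto (fun n => μ.real ((f (e j) '' B n) ∆ B n)) atTop (𝓝 0) :=
      squeeze_zero' (.of_forall fun n => measureReal_nonneg)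
        ((eventually_gt_atTop j).mono fun n hn => hBinv n j hn)
        tendsto_one_div_add_atTop_nhds_zero_nat
    exact (ENNReal.tendsto_toReal_iff (fun n => measure_ne_top μ _) ENNReal.zero_ne_top).mp this
  · exact tendsto_iff_norm_sub_tendsto_zero.mpr
      (squeeze_zero (fun n => norm_nonneg _) hBA tendsto_one_div_add_atTop_nhds_zero_nat)

end IsPMPAction

open TopologicalSpace in
theorem closure_EClass_subset_ergodic_of_stronglyErgodic_general
    {Γ : Type} [Group Γ] [Countable Γ]
    {X : Type} [MeasurableSpace X]
    (μ : Measure X) [IsProbabilityMeasure μ]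
    (f : Γ → X → X) (hf : IsPMPAction f μ) (hse : IsStronglyErgodic f μ)
    (K : Type) [TopologicalSpace K] [MetrizableSpace K]
    [SecondCountableTopology K] [MeasurableSpace K] [BorelSpace K] :
    closure (EClass K f μ) ⊆ ErgodicInvariantMeasures Γ K := by
  intro ρ hρ
  refine ⟨hf.closure_EClass_subset_setOf_measurePreserving hρ, fun A hA hAinv => ?_⟩
  obtain ⟨B, hB, hBinv, hlim⟩ := hf.exists_almostInvariantSeq_tendsto_measureReal hρ hA hAinv
  rcases hse.eq_zero_or_eq_one_of_tendsto hB hBinv hlim with h | h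
  · exact .inl ((measureReal_eq_zero_iff).mp h)
  · exact .inr ((ENNReal.toReal_eq_one_iff _).mp h)

open TopologicalSpace in
/-- If `f` is strongly ergodic then the weak* closure of `E(f,K)` consists of ergodic
invariant measures. -/
theorem closure_EClass_subset_ergodic_of_stronglyErgodic
    {Γ : Type} [Group Γ] [Countable Γ]
    {X : Type} [MeasurableSpace X] [StandardBorelSpace X]
    (μ : Measure X) [IsProbabilityMeasure μ]
    (f : Γ → X → X) (hf : IsPMPAction f μ) (hse : IsStronglyErgodic f μ)
    (K : Type) [TopologicalSpace K] [CompactSpace K] [MetrizableSpace K]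
    [SecondCountableTopology K] [MeasurableSpace K] [BorelSpace K] :
    closure (EClass K f μ) ⊆ ErgodicInvariantMeasures Γ K :=
  closure_EClass_subset_ergodic_of_stronglyErgodic_general μ f hf hse K
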